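/- arXiv:2409.10169 — 3 statements merged into one kernel-verified Lean document; each statement's English description precedes it below -/
import Mathlib

section
/- For all real ξ > 0, we have e^{-ξ} ≤ 2 ln(1 + 1/ξ). -/
theorem stmt_0 (ξ : ℝ) (hξ : 0 < ξ) :
    Real.exp (-ξ) ≤ 2 * Real.log (1 + 1 / ξ) := by
  have h1 : (0:ℝ) < 1 + ξ := by linarith
  -- log(1+1/ξ) ≥ 1/(1+ξ)
  have hlog : 1 / (1 + ξ) ≤ Real.log (1 + 1 / ξ) := by
    have h2 : Real.log (ξ / (1 + ξ)) ≤ ξ / (1 + ξ) - 1 :=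
      Real.log_le_sub_one_of_pos (by positivity)
    have h3 : Real.log (1 + 1 / ξ) = - Real.log (ξ / (1 + ξ)) := by
      rw [← Real.log_inv]
      congr 1
      field_simp; ring
    rw [h3]
    have : ξ / (1 + ξ) - 1 = -(1 / (1 + ξ)) := by field_simp; ring
    linarith [this ▸ h2]
  -- exp(-ξ) ≤ 2/(1+ξ)
  have hexp : Real.exp (-ξ) ≤ 2 / (1 + ξ) := by
    rw [Real.exp_neg, inv_le_iff_one_le_mul₀ (Real.exp_pos ξ), div_mul_eq_mul_div,
      le_div_iff₀ h1]
    have := Real.add_one_le_exp ξ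
    nlinarith [Real.exp_pos ξ]
  have : 2 / (1 + ξ) ≤ 2 * Real.log (1 + 1 / ξ) := by
    rw [div_eq_mul_one_div]
    exact mul_le_mul_of_nonneg_left hlog (by norm_num)
  linarith
end

section
/- For the Laguerre polynomials L_n, defined by L_n(x) = Σ_{k=0}^n binom(n,k) ((−1)^k/k!) x^k, and all real μ, ξ and natural n, one has the multiplication formula L_n(μξ) = Σ_{k=0}^n binom(n,k) μ^k (1−μ)^{n−k} L_k(ξ). -/
/-- The `n`-th Laguerre polynomial. -/
noncomputable def laguerre (n : ℕ) (x : ℝ) : ℝ :=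
  ∑ k ∈ Finset.range (n + 1),
    (n.choose k : ℝ) * ((-1) ^ k / (Nat.factorial k : ℝ)) * x ^ k

lemma key_sum (n j : ℕ) (μ : ℝ) (hj : j ≤ n) :
    ∑ k ∈ Finset.range (n + 1),
      (n.choose k : ℝ) * (k.choose j : ℝ) * μ ^ k * (1 - μ) ^ (n - k)
      = (n.choose j : ℝ) * μ ^ j := by
  have h1 : ∑ k ∈ Finset.range (n + 1),
      (n.choose k : ℝ) * (k.choose j : ℝ) * μ ^ k * (1 - μ) ^ (n - k)
      = ∑ k ∈ Finset.Ico j (n + 1),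
      (n.choose k : ℝ) * (k.choose j : ℝ) * μ ^ k * (1 - μ) ^ (n - k) := by
    rw [Finset.range_eq_Ico]
    refine (Finset.sum_subset (Finset.Ico_subset_Ico (Nat.zero_le _) le_rfl) ?_).symm
    intro k hk hk'
    simp only [Finset.mem_Ico, Nat.zero_le, true_and, not_and, not_lt] at hk hk'
    have : k < j := by
      rcases lt_or_ge k j with h | h
      · exact h
      · exact absurd hk (by omega)
    rw [Nat.choose_eq_zero_of_lt this]
    ring
  rw [h1, Finset.sum_Ico_eq_sum_range]
  have h2 : ∀ m ∈ Finset.range (n + 1 - j),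
      (n.choose (j + m) : ℝ) * ((j + m).choose j : ℝ) * μ ^ (j + m) * (1 - μ) ^ (n - (j + m))
      = (n.choose j : ℝ) * μ ^ j * (μ ^ m * (1 - μ) ^ (n - j - m) * ((n - j).choose m : ℝ)) := by
    intro m hm
    simp only [Finset.mem_range] at hm
    have hkn : j + m ≤ n := by omega
    have hident : (n.choose (j + m)) * ((j + m).choose j) = n.choose j * ((n - j).choose m) := by
      have := Nat.choose_mul (n := n) (Nat.le_add_right j m)
      simpa [Nat.add_sub_cancel_left] using this
    have hident' : ((n.choose (j + m)) : ℝ) * ((j + m).choose j : ℝ)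
        = (n.choose j : ℝ) * ((n - j).choose m : ℝ) := by
      exact_mod_cast congrArg (Nat.cast : ℕ → ℝ) hident
    have hsub : n - (j + m) = n - j - m := by omega
    rw [hsub, pow_add, hident']
    ring
  rw [Finset.sum_congr rfl h2, ← Finset.mul_sum]
  have h3 : n + 1 - j = (n - j) + 1 := by omega
  rw [h3]
  have := add_pow μ (1 - μ) (n - j)
  simp only [add_sub_cancel, one_pow] at this
  rw [← this]
  ring

theorem stmt_14 (n : ℕ) (μ ξ : ℝ) :
    laguerre n (μ * ξ) = ∑ k ∈ Finset.range (n + 1),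
      (n.choose k : ℝ) * μ ^ k * (1 - μ) ^ (n - k) * laguerre k ξ := by
  have hlag : ∀ k ∈ Finset.range (n + 1), laguerre k ξ
      = ∑ j ∈ Finset.range (n + 1),
        (k.choose j : ℝ) * ((-1) ^ j / (Nat.factorial j : ℝ)) * ξ ^ j := by
    intro k hk
    simp only [Finset.mem_range] at hk
    unfold laguerre
    refine Finset.sum_subset (by intro x hx; simp only [Finset.mem_range] at *; omega) ?_
    intro j hj hj'
    simp only [Finset.mem_range, not_lt] at hj hj'
    rw [Nat.choose_eq_zero_of_lt (by omega)]
    ring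
  rw [Finset.sum_congr rfl (fun k hk => by rw [hlag k hk])]
  simp only [Finset.mul_sum]
  rw [Finset.sum_comm]
  unfold laguerre
  refine Finset.sum_congr rfl fun j hj => ?_
  simp only [Finset.mem_range] at hj
  have := key_sum n j μ (by omega)
  calc (n.choose j : ℝ) * ((-1) ^ j / (Nat.factorial j : ℝ)) * (μ * ξ) ^ j
      = ((-1) ^ j / (Nat.factorial j : ℝ) * ξ ^ j) * ((n.choose j : ℝ) * μ ^ j) := by
        rw [mul_pow]; ring
    _ = ((-1) ^ j / (Nat.factorial j : ℝ) * ξ ^ j) *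
        ∑ k ∈ Finset.range (n + 1),
          (n.choose k : ℝ) * (k.choose j : ℝ) * μ ^ k * (1 - μ) ^ (n - k) := by rw [this]
    _ = _ := by rw [Finset.mul_sum]; exact Finset.sum_congr rfl fun k _ => by ring
end

section
/- Let T > 0, n ∈ ℕ, and l > (n+1)/T. Define φ_n(ρ) = ρ^n e^{-Tρ} and φ_n^l(ρ) = ρ^n e^{-Tρ} ((e^{ρ/l} − 1)/(ρ/l))^{n+1} for ρ > 0. Then ‖φ_n − φ_n^l‖_{L²(0,∞)} ≤ ((n+1)/(2^{n+5/2} l)) · √((2n+2)!) / (T − (n+1)/l)^{n+3/2}; in particular ‖φ_n − φ_n^l‖_{L²(0,∞)} → 0 as l → ∞. -/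
open MeasureTheory Filter Set

lemma aux_exp1 {x : ℝ} : Real.exp x - 1 ≤ x * Real.exp x := by
  have h1 := Real.add_one_le_exp (-x)
  have h2 : Real.exp (-x) * Real.exp x = 1 := by rw [← Real.exp_add]; simp
  nlinarith [Real.exp_pos x]

lemma aux_exp2 {x : ℝ} (hx : 0 ≤ x) : Real.exp x - 1 - x ≤ x ^ 2 / 2 * Real.exp x := by
  have h1 : ∫ t in (0:ℝ)..x, (Real.exp t - 1) = Real.exp x - 1 - x := by
    rw [intervalIntegral.integral_sub (Real.continuous_exp.intervalIntegrable _ _)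
      (intervalIntegrable_const)]
    simp [Real.exp_zero]
  have h2 : ∫ t in (0:ℝ)..x, (t * Real.exp x) = x ^ 2 / 2 * Real.exp x := by
    rw [intervalIntegral.integral_mul_const, integral_id]
    ring
  rw [← h1, ← h2]
  apply intervalIntegral.integral_mono_on hx
  · exact ((Real.continuous_exp.sub continuous_const).intervalIntegrable _ _)
  · exact ((continuous_id.mul continuous_const).intervalIntegrable _ _)
  · intro t ht
    rcases ht with ⟨ht0, htx⟩
    calc Real.exp t - 1 ≤ t * Real.exp t := aux_exp1
    _ ≤ t * Real.exp x := by
        exact mul_le_mul_of_nonneg_left (Real.exp_le_exp.mpr htx) ht0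

lemma aux_pow {g : ℝ} (hg : 1 ≤ g) (n : ℕ) :
    g ^ (n + 1) - 1 ≤ ((n : ℝ) + 1) * (g - 1) * g ^ n := by
  induction n with
  | zero => simp
  | succ k ih =>
    have hgk : (1:ℝ) ≤ g ^ k := one_le_pow₀ hg
    have hgk1 : (1:ℝ) ≤ g ^ (k+1) := one_le_pow₀ hg
    have hg0 : (0:ℝ) ≤ g := by linarith
    have h1 : g * (g ^ (k+1) - 1) ≤ g * (((k:ℝ) + 1) * (g - 1) * g ^ k) :=
      mul_le_mul_of_nonneg_left ih hg0
    have h2 : (g - 1) * 1 ≤ (g - 1) * g ^ (k+1) :=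
      mul_le_mul_of_nonneg_left hgk1 (by linarith)
    have e1 : g ^ (k+1+1) = g * g ^ (k+1) := by ring
    have e2 : g * (((k:ℝ) + 1) * (g - 1) * g ^ k) = ((k:ℝ)+1) * (g-1) * g ^ (k+1) := by ring
    push_cast
    nlinarith [h1, h2]

lemma aux_key (T : ℝ) (n : ℕ) {l ρ : ℝ} (hl : 0 < l) (hρ : 0 < ρ) :
    |ρ ^ n * Real.exp (-T * ρ) * ((Real.exp (ρ / l) - 1) / (ρ / l)) ^ (n + 1)
      - ρ ^ n * Real.exp (-T * ρ)|
    ≤ ((n : ℝ) + 1) / (2 * l) * ρ ^ (n + 1)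
        * Real.exp (-(T - ((n : ℝ) + 1) / l) * ρ) := by
  set x := ρ / l with hxdef
  have hx : 0 < x := div_pos hρ hl
  set g := (Real.exp x - 1) / x with hgdef
  have hg1 : 1 ≤ g := by
    rw [hgdef, le_div_iff₀ hx]
    have := Real.add_one_le_exp x
    linarith
  have hgsub : g - 1 ≤ x / 2 * Real.exp x := by
    rw [hgdef, div_sub' hx.ne', div_le_iff₀ hx]
    have := aux_exp2 hx.le
    nlinarith
  have hgle : g ≤ Real.exp x := by
    rw [hgdef, div_le_iff₀ hx]
    have := aux_exp1 (x := x)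
    linarith
  have hgn : g ^ n ≤ Real.exp x ^ n := pow_le_pow_left₀ (by linarith) hgle n
  have hpow : g ^ (n + 1) - 1 ≤ ((n : ℝ) + 1) / 2 * x * Real.exp (((n:ℝ)+1) * x) := by
    calc g ^ (n + 1) - 1 ≤ ((n : ℝ) + 1) * (g - 1) * g ^ n := aux_pow hg1 n
    _ ≤ ((n : ℝ) + 1) * (x / 2 * Real.exp x) * Real.exp x ^ n := by
        apply mul_le_mul
        · exact mul_le_mul_of_nonneg_left hgsub (by positivity)
        · exact hgn
        · positivity
        · positivity
    _ = ((n : ℝ) + 1) / 2 * x * Real.exp (((n:ℝ)+1) * x) := by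
        rw [← Real.exp_nat_mul, show ((n:ℝ)+1) * x = x + n * x by ring, Real.exp_add]
        ring
  have hnn : 0 ≤ ρ ^ n * Real.exp (-T * ρ) * (g ^ (n+1) - 1) := by
    have : 1 ≤ g ^ (n+1) := one_le_pow₀ hg1
    exact mul_nonneg (mul_nonneg (by positivity) (Real.exp_pos _).le) (by linarith)
  have habs : ρ ^ n * Real.exp (-T * ρ) * g ^ (n + 1) - ρ ^ n * Real.exp (-T * ρ)
      = ρ ^ n * Real.exp (-T * ρ) * (g ^ (n+1) - 1) := by ring
  rw [habs, abs_of_nonneg hnn]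
  have hexp : Real.exp (-T * ρ) * Real.exp (((n:ℝ)+1) * x)
      = Real.exp (-(T - ((n : ℝ) + 1) / l) * ρ) := by
    rw [← Real.exp_add]
    congr 1
    field_simp [hxdef]
    have hxl : x * l = ρ := by rw [hxdef]; exact div_mul_cancel₀ ρ hl.ne'
    linear_combination ((n:ℝ) + 1) * hxl
  calc ρ ^ n * Real.exp (-T * ρ) * (g ^ (n+1) - 1)
      ≤ ρ ^ n * Real.exp (-T * ρ) * (((n : ℝ) + 1) / 2 * x * Real.exp (((n:ℝ)+1) * x)) := by
        apply mul_le_mul_of_nonneg_left hpow (by positivity)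
    _ = ((n : ℝ) + 1) / (2 * l) * ρ ^ (n + 1) * Real.exp (-(T - ((n : ℝ) + 1) / l) * ρ) := by
        rw [← hexp, hxdef]
        field_simp
        ring

lemma aux_gamma (m : ℕ) {r : ℝ} (hr : 0 < r) :
    IntegrableOn (fun t : ℝ => t ^ m * Real.exp (-(r * t))) (Ioi 0) ∧
    ∫ t in Ioi (0:ℝ), t ^ m * Real.exp (-(r * t)) = (m.factorial : ℝ) / r ^ (m + 1) := by
  constructor
  · have h := integrableOn_rpow_mul_exp_neg_mul_rpow
      (p := 1) (s := (m : ℝ)) (b := r)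
      (lt_of_lt_of_le (by norm_num) (Nat.cast_nonneg m)) zero_lt_one hr
    apply h.congr_fun _ measurableSet_Ioi
    intro t ht
    show t ^ ((m:ℝ)) * Real.exp (-r * t ^ (1:ℝ)) = t ^ m * Real.exp (-(r * t))
    rw [Real.rpow_natCast, Real.rpow_one, neg_mul]
  · have h := Real.integral_rpow_mul_exp_neg_mul_Ioi
      (a := (m : ℝ) + 1) (r := r) (by positivity) hr
    have heq : ∫ t in Ioi (0:ℝ), t ^ m * Real.exp (-(r * t))
        = ∫ t in Ioi (0:ℝ), t ^ ((m : ℝ) + 1 - 1) * Real.exp (-(r * t)) := by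
      refine setIntegral_congr_fun measurableSet_Ioi (fun t ht => ?_)
      show t ^ m * Real.exp (-(r * t)) = t ^ ((m:ℝ) + 1 - 1) * Real.exp (-(r * t))
      rw [add_sub_cancel_right, Real.rpow_natCast]
    rw [heq, h]
    have h2 : ((m : ℝ) + 1) = ((m + 1 : ℕ) : ℝ) := by push_cast; ring
    rw [h2, Real.rpow_natCast, show ((m+1:ℕ):ℝ) = ((m:ℝ)+1) by push_cast; ring,
      Real.Gamma_nat_eq_factorial, div_pow, one_pow]
    ring

theorem stmt_16 (T : ℝ) (hT : 0 < T) (n : ℕ)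
    (φn : ℝ → ℝ) (hφn : ∀ ρ, φn ρ = ρ ^ n * Real.exp (-T * ρ))
    (φnl : ℝ → ℝ → ℝ)
    (hφnl : ∀ l : ℝ, ∀ ρ : ℝ,
      φnl l ρ = ρ ^ n * Real.exp (-T * ρ) * ((Real.exp (ρ / l) - 1) / (ρ / l)) ^ (n + 1)) :
    (∀ l : ℝ, ((n : ℝ) + 1) / T < l →
      (∫ ρ in Set.Ioi (0 : ℝ), (φn ρ - φnl l ρ) ^ 2) ^ (1 / 2 : ℝ)
        ≤ ((n : ℝ) + 1) / (2 ^ ((n : ℝ) + 5 / 2) * l)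
            * Real.sqrt (Nat.factorial (2 * n + 2))
            / (T - ((n : ℝ) + 1) / l) ^ ((n : ℝ) + 3 / 2)) ∧
    Tendsto (fun l : ℝ =>
        (∫ ρ in Set.Ioi (0 : ℝ), (φn ρ - φnl l ρ) ^ 2) ^ (1 / 2 : ℝ))
      atTop (nhds 0) := by
  have hmain : ∀ l : ℝ, ((n : ℝ) + 1) / T < l →
      (∫ ρ in Set.Ioi (0 : ℝ), (φn ρ - φnl l ρ) ^ 2) ^ (1 / 2 : ℝ)
        ≤ ((n : ℝ) + 1) / (2 ^ ((n : ℝ) + 5 / 2) * l)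
            * Real.sqrt (Nat.factorial (2 * n + 2))
            / (T - ((n : ℝ) + 1) / l) ^ ((n : ℝ) + 3 / 2) := by
    intro l hl
    have hl0 : 0 < l := lt_trans (by positivity) hl
    set a : ℝ := T - ((n : ℝ) + 1) / l with hadef
    have ha : 0 < a := by
      have h1 : ((n : ℝ) + 1) < l * T := by
        rw [div_lt_iff₀ hT] at hl; linarith
      have h2 : ((n : ℝ) + 1) / l < T := by
        rw [div_lt_iff₀ hl0]; linarith
      simp only [hadef]; linarith
    set C : ℝ := ((n : ℝ) + 1) / (2 * l) with hCdef
    have hC : 0 < C := by positivity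
    have h2a : (0:ℝ) < 2 * a := by linarith
    -- the squared bound function equals a gamma-type integrand
    have hfun : ∀ ρ : ℝ, (C * ρ ^ (n + 1) * Real.exp (-a * ρ)) ^ 2
        = C ^ 2 * (ρ ^ (2 * n + 2) * Real.exp (-(2 * a * ρ))) := by
      intro ρ
      have he : Real.exp (-a * ρ) ^ 2 = Real.exp (-(2 * a * ρ)) := by
        rw [← Real.exp_nat_mul]; congr 1; push_cast; ring
      rw [mul_pow, mul_pow, ← pow_mul, he]
      ring_nf
    have hInt2 : IntegrableOn (fun ρ : ℝ => (C * ρ ^ (n + 1) * Real.exp (-a * ρ)) ^ 2)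
        (Ioi 0) := by
      have h : IntegrableOn (fun ρ : ℝ => C ^ 2 * (ρ ^ (2 * n + 2) * Real.exp (-(2 * a * ρ))))
          (Ioi 0) := ((aux_gamma (2 * n + 2) h2a).1.const_mul (C ^ 2))
      exact IntegrableOn.congr_fun h (fun ρ _ => (hfun ρ).symm) measurableSet_Ioi
    -- pointwise bound
    have hpt : ∀ ρ ∈ Ioi (0:ℝ), (φn ρ - φnl l ρ) ^ 2
        ≤ (C * ρ ^ (n + 1) * Real.exp (-a * ρ)) ^ 2 := by
      intro ρ hρ
      have hkey := aux_key T n hl0 (mem_Ioi.mp hρ)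
      rw [← sq_abs ((φn ρ - φnl l ρ))]
      have habs : |φn ρ - φnl l ρ| ≤ C * ρ ^ (n + 1) * Real.exp (-a * ρ) := by
        rw [hφn, hφnl, abs_sub_comm]
        exact hkey
      exact pow_le_pow_left₀ (abs_nonneg _) habs 2
    -- integrability of the difference squared
    have hcont : ContinuousOn (fun ρ : ℝ => (φn ρ - φnl l ρ) ^ 2) (Ioi 0) := by
      have c1 : ContinuousOn (fun ρ : ℝ => ρ ^ n * Real.exp (-T * ρ)) (Ioi 0) :=
        (Continuous.continuousOn (by continuity))
      have c2 : ContinuousOn (fun ρ : ℝ => (Real.exp (ρ / l) - 1) / (ρ / l)) (Ioi 0) := by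
        apply ContinuousOn.div
        · exact Continuous.continuousOn (by continuity)
        · exact Continuous.continuousOn (by continuity)
        · intro ρ hρ
          exact div_ne_zero (ne_of_gt (mem_Ioi.mp hρ)) hl0.ne'
      have c3 : ContinuousOn (fun ρ : ℝ => φn ρ - φnl l ρ) (Ioi 0) := by
        simp only [hφn, hφnl]
        exact c1.sub (c1.mul (c2.pow _))
      exact c3.pow 2
    have hIntD : IntegrableOn (fun ρ : ℝ => (φn ρ - φnl l ρ) ^ 2) (Ioi 0) := by
      apply Integrable.mono' hInt2 (hcont.aestronglyMeasurable measurableSet_Ioi)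
      rw [ae_restrict_iff' measurableSet_Ioi]
      filter_upwards with ρ hρ
      rw [Real.norm_eq_abs, abs_of_nonneg (sq_nonneg _)]
      exact hpt ρ hρ
    -- the integral comparison
    have hle : (∫ ρ in Ioi (0:ℝ), (φn ρ - φnl l ρ) ^ 2)
        ≤ ∫ ρ in Ioi (0:ℝ), (C * ρ ^ (n + 1) * Real.exp (-a * ρ)) ^ 2 :=
      setIntegral_mono_on hIntD hInt2 measurableSet_Ioi hpt
    have hval : (∫ ρ in Ioi (0:ℝ), (C * ρ ^ (n + 1) * Real.exp (-a * ρ)) ^ 2)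
        = C ^ 2 * ((2 * n + 2).factorial : ℝ) / (2 * a) ^ (2 * n + 3) := by
      rw [show (fun ρ : ℝ => (C * ρ ^ (n + 1) * Real.exp (-a * ρ)) ^ 2)
          = (fun ρ : ℝ => C ^ 2 * (ρ ^ (2 * n + 2) * Real.exp (-(2 * a * ρ)))) from
          funext hfun]
      rw [integral_const_mul]
      have := (aux_gamma (2 * n + 2) h2a).2
      rw [show (fun ρ : ℝ => ρ ^ (2 * n + 2) * Real.exp (-(2 * a * ρ)))
          = (fun t : ℝ => t ^ (2 * n + 2) * Real.exp (-(2 * a * t))) from rfl]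
      rw [this]
      ring_nf
    -- the right-hand side squared
    set R : ℝ := ((n : ℝ) + 1) / (2 ^ ((n : ℝ) + 5 / 2) * l)
        * Real.sqrt (Nat.factorial (2 * n + 2)) / a ^ ((n : ℝ) + 3 / 2) with hRdef
    have hR0 : 0 ≤ R := by
      apply div_nonneg
      apply mul_nonneg
      · apply div_nonneg (by positivity)
        positivity
      · exact Real.sqrt_nonneg _
      · exact Real.rpow_nonneg ha.le _
    have e2 : ((2:ℝ) ^ ((n:ℝ) + 5 / 2)) ^ 2 = (2:ℝ) ^ (2 * n + 5) := by
      rw [← Real.rpow_natCast ((2:ℝ) ^ ((n:ℝ) + 5 / 2)) 2,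
        ← Real.rpow_mul (by norm_num : (0:ℝ) ≤ 2),
        show ((n:ℝ) + 5 / 2) * (2:ℕ) = ((2 * n + 5 : ℕ) : ℝ) by push_cast; ring,
        Real.rpow_natCast]
    have ea : (a ^ ((n:ℝ) + 3 / 2)) ^ 2 = a ^ (2 * n + 3) := by
      rw [← Real.rpow_natCast (a ^ ((n:ℝ) + 3 / 2)) 2, ← Real.rpow_mul ha.le,
        show ((n:ℝ) + 3 / 2) * (2:ℕ) = ((2 * n + 3 : ℕ) : ℝ) by push_cast; ring,
        Real.rpow_natCast]
    have es : Real.sqrt ((2 * n + 2).factorial : ℝ) ^ 2 = ((2 * n + 2).factorial : ℝ) :=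
      Real.sq_sqrt (by positivity)
    have hRsq : R ^ 2 = C ^ 2 * ((2 * n + 2).factorial : ℝ) / (2 * a) ^ (2 * n + 3) := by
      rw [hRdef, hCdef, div_pow, mul_pow, div_pow, mul_pow, e2, ea, es, mul_pow]
      have h4 : (2:ℝ) ^ (2 * n + 5) = 2 ^ (2 * n + 3) * 4 := by
        rw [show 2 * n + 5 = 2 * n + 3 + 2 by ring, pow_add]; norm_num
      have hp1 : ((2:ℝ)) ^ (2 * n + 3) ≠ 0 := by positivity
      have hp2 : a ^ (2 * n + 3) ≠ 0 := by positivity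
      field_simp
      ring
    have hnn : 0 ≤ ∫ ρ in Ioi (0:ℝ), (φn ρ - φnl l ρ) ^ 2 :=
      integral_nonneg (fun ρ => sq_nonneg _)
    calc (∫ ρ in Ioi (0:ℝ), (φn ρ - φnl l ρ) ^ 2) ^ (1 / 2 : ℝ)
        = Real.sqrt (∫ ρ in Ioi (0:ℝ), (φn ρ - φnl l ρ) ^ 2) := (Real.sqrt_eq_rpow _).symm
      _ ≤ Real.sqrt (R ^ 2) := by
          apply Real.sqrt_le_sqrt
          rw [hRsq]
          exact hle.trans (le_of_eq hval)
      _ = R := Real.sqrt_sq hR0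
  refine ⟨hmain, ?_⟩
  -- the bound tends to zero
  have hB : Tendsto (fun l : ℝ => ((n : ℝ) + 1) / (2 ^ ((n : ℝ) + 5 / 2) * l)
      * Real.sqrt (Nat.factorial (2 * n + 2))
      / (T - ((n : ℝ) + 1) / l) ^ ((n : ℝ) + 3 / 2)) atTop (nhds 0) := by
    have h1 : Tendsto (fun l : ℝ => ((n : ℝ) + 1) / (2 ^ ((n : ℝ) + 5 / 2) * l))
        atTop (nhds 0) := by
      apply Tendsto.div_atTop tendsto_const_nhds
      exact Tendsto.const_mul_atTop (by positivity) tendsto_id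
    have h2 : Tendsto (fun l : ℝ => (T - ((n : ℝ) + 1) / l) ^ ((n : ℝ) + 3 / 2))
        atTop (nhds (T ^ ((n : ℝ) + 3 / 2))) := by
      apply Tendsto.rpow_const
      · have : Tendsto (fun l : ℝ => ((n : ℝ) + 1) / l) atTop (nhds 0) :=
          Tendsto.div_atTop tendsto_const_nhds tendsto_id
        have := tendsto_const_nhds (x := T) (f := atTop (α := ℝ)).sub this
        simpa using this
      · exact Or.inl hT.ne'
    have hTpos : (0:ℝ) < T ^ ((n : ℝ) + 3 / 2) := Real.rpow_pos_of_pos hT _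
    have := Tendsto.div (h1.mul_const (Real.sqrt (Nat.factorial (2 * n + 2)))) h2 hTpos.ne'
    rw [zero_mul, zero_div] at this
    exact this
  apply tendsto_of_tendsto_of_tendsto_of_le_of_le' tendsto_const_nhds hB
  · filter_upwards with l
    exact Real.rpow_nonneg (integral_nonneg (fun ρ => sq_nonneg _)) _
  · filter_upwards [eventually_gt_atTop (((n : ℝ) + 1) / T)] with l hl
    exact hmain l hl
end
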